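/- arXiv:2603.20599 — 2 statements merged into one kernel-verified Lean document; each statement's English description precedes it below -/
import Mathlib

section
/- Let V be a real vector space, a and b symmetric bilinear forms on V, V_h ⊆ V a linear subspace, and a^h, b^h symmetric bilinear forms on V_h. Let λ, λ_h ∈ ℝ, u ∈ V and u_h ∈ V_h satisfy a(u, v) = λ b(u, v) for all v ∈ V and a^h(u_h, v_h) = λ_h b^h(u_h, v_h) for all v_h ∈ V_h. Then the following identity holds: (λ_h − λ) b^h(u_h, u_h) = a(u − u_h, u − u_h) − λ b(u − u_h, u − u_h) + [a^h(u_h, u_h) − a(u_h, u_h)] + λ [b(u_h, u_h) − b^h(u_h, u_h)]. -/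
/-- Algebraic identity underlying the double-rate eigenvalue error
estimate: if `(λ, u)` is a continuous eigenpair of the symmetric forms `a, b` on `V`
and `(λ_h, u_h)` a discrete eigenpair of the symmetric forms `a^h, b^h` on the
subspace `V_h ⊆ V`, then
`(λ_h − λ) b^h(u_h,u_h) = a(u−u_h,u−u_h) − λ b(u−u_h,u−u_h)
  + [a^h(u_h,u_h) − a(u_h,u_h)] + λ [b(u_h,u_h) − b^h(u_h,u_h)]`. -/
theorem eigenvalue_error_identity
    (V : Type*) [AddCommGroup V] [Module ℝ V]
    (a b : V →ₗ[ℝ] V →ₗ[ℝ] ℝ)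
    (ha_symm : ∀ u v : V, a u v = a v u)
    (hb_symm : ∀ u v : V, b u v = b v u)
    (Vh : Submodule ℝ V)
    (ah bh : Vh →ₗ[ℝ] Vh →ₗ[ℝ] ℝ)
    (hah_symm : ∀ u v : Vh, ah u v = ah v u)
    (hbh_symm : ∀ u v : Vh, bh u v = bh v u)
    (lam lamh : ℝ) (u : V) (uh : Vh)
    (hu : ∀ v : V, a u v = lam * b u v)
    (huh : ∀ vh : Vh, ah uh vh = lamh * bh uh vh) :
    (lamh - lam) * bh uh uh =
      a (u - (uh : V)) (u - (uh : V)) - lam * b (u - (uh : V)) (u - (uh : V))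
        + (ah uh uh - a (uh : V) (uh : V))
        + lam * (b (uh : V) (uh : V) - bh uh uh) := by
  have h1 : a u u = lam * b u u := hu u
  have h2 : a u (uh : V) = lam * b u (uh : V) := hu (uh : V)
  have h3 : a (uh : V) u = lam * b (uh : V) u := by
    rw [ha_symm, hb_symm]; exact h2
  have h4 : ah uh uh = lamh * bh uh uh := huh uh
  simp only [map_sub, LinearMap.sub_apply, h1, h2, h3, h4]
  ring
end

section
/- Let V be a real vector space, V_h ⊆ V a linear subspace, a a symmetric bilinear form on V, s a bilinear form on V, b a bilinear form on V, and a^h, b^h bilinear forms on V_h. Suppose: (i) w ∈ V and f ∈ V satisfy a(w, z) = b(f, z) for all z ∈ V; (ii) w_h ∈ V_h and g ∈ V_h satisfy a^h(w_h, z_h) = b^h(g, z_h) for all z_h ∈ V_h; (iii) v ∈ V satisfies a(v, z) = s(w − w_h, z) for all z ∈ V. Then for every v_I ∈ V_h: s(w − w_h, w − w_h) = a(v − v_I, w − w_h) + [a^h(w_h, v_I) − a(w_h, v_I)] + [b(f, v_I) − b^h(g, v_I)]. -/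
/-- Error decomposition identity from the duality (Aubin–Nitsche)
argument: if `a(w,z) = b(f,z)` for all `z` (continuous source problem),
`a^h(w_h,z_h) = b^h(g,z_h)` for all `z_h` (discrete source problem), and
`a(v,z) = s(w − w_h, z)` for all `z` (dual problem), then for every `v_I ∈ V_h`:
`s(w−w_h, w−w_h) = a(v−v_I, w−w_h) + [a^h(w_h,v_I) − a(w_h,v_I)] + [b(f,v_I) − b^h(g,v_I)]`. -/
theorem duality_error_decomposition
    (V : Type*) [AddCommGroup V] [Module ℝ V]
    (Vh : Submodule ℝ V)
    (a s b : V →ₗ[ℝ] V →ₗ[ℝ] ℝ)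
    (ha_symm : ∀ u v : V, a u v = a v u)
    (ah bh : Vh →ₗ[ℝ] Vh →ₗ[ℝ] ℝ)
    (w f : V) (hw : ∀ z : V, a w z = b f z)
    (wh g : Vh) (hwh : ∀ zh : Vh, ah wh zh = bh g zh)
    (v : V) (hv : ∀ z : V, a v z = s (w - (wh : V)) z)
    (vI : Vh) :
    s (w - (wh : V)) (w - (wh : V)) =
      a (v - (vI : V)) (w - (wh : V))
        + (ah wh vI - a (wh : V) (vI : V))
        + (b f (vI : V) - bh g vI) := by
  have h1 : s (w - (wh : V)) (w - (wh : V)) = a v (w - (wh : V)) :=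
    (hv _).symm
  have h2 : a v (w - (wh : V)) =
      a (v - (vI : V)) (w - (wh : V)) + a (vI : V) (w - (wh : V)) := by
    rw [map_sub]; simp
  have h3 : a (vI : V) (w - (wh : V)) = a w (vI : V) - a (wh : V) (vI : V) := by
    rw [ha_symm, map_sub]; simp
  have h4 := hw (vI : V)
  have h5 := hwh vI
  rw [h1, h2, h3, h4]
  linarith
end
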